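/- Let S be an operator on X which is dichotomous with respect to the decomposition X = X₊ ⊕ X₋. Then D(S) = (D(S) ∩ X₊) ⊕ (D(S) ∩ X₋), σ(S) = σ(S|X₊) ∪ σ(S|X₋), and X₊ and X₋ are (S − λ)⁻¹-invariant for every λ ∈ ρ(S). If moreover S is strictly dichotomous with respect to this decomposition, then there exist h > 0 and M > 0 such that the strip {λ ∈ ℂ : |Re λ| ≤ h} is contained in ρ(S) and sup_{|Re λ| ≤ h} ‖(S − λ)⁻¹‖ ≤ M. -/

import Mathlib

open Complex MeasureTheory Set Filter

noncomputable section

variable {E : Type*} [NormedAddCommGroup E] [NormedSpace ℂ E]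

/-- `R : E →L[ℂ] E` is the (everywhere defined, bounded) inverse of `S - lam`. -/
def IsResolventAt (S : E →ₗ.[ℂ] E) (lam : ℂ) (R : E →L[ℂ] E) : Prop :=
  (∀ x, R x ∈ S.domain) ∧
  (∀ x : S.domain, R (S x - lam • (x : E)) = (x : E)) ∧
  (∀ (x : E) (hx : R x ∈ S.domain), S ⟨R x, hx⟩ - lam • R x = x)

/-- The resolvent set of the (possibly unbounded, not densely defined) operator `S`. -/
def resolvSet (S : E →ₗ.[ℂ] E) : Set ℂ := {lam | ∃ R, IsResolventAt S lam R}

/-- The spectrum of `S`. -/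
def pSpectrum (S : E →ₗ.[ℂ] E) : Set ℂ := (resolvSet S)ᶜ

-- The resolvent `(S - lam)⁻¹` of `S` at `lam` (junk value `0` if `lam ∉ ρ(S)`).
open Classical in
def res (S : E →ₗ.[ℂ] E) (lam : ℂ) : E →L[ℂ] E :=
  if h : ∃ R, IsResolventAt S lam R then h.choose else 0

/-- Condition (H): the strip `|Re lam| ≤ h` consists of resolvent points
and the resolvent is bounded by `M` there. -/
def CondH (S : E →ₗ.[ℂ] E) (h M : ℝ) : Prop :=
  0 < h ∧ ∀ lam : ℂ, |lam.re| ≤ h → lam ∈ resolvSet S ∧ ‖res S lam‖ ≤ M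

/-- The set of `x` such that the local resolvent `lam ↦ (S - lam)⁻¹ x` has a bounded analytic
extension to (a neighbourhood of) `H`; it is a linear subspace of `E`. -/
def Gsub (S : E →ₗ.[ℂ] E) (H : Set ℂ) : Submodule ℂ E where
  carrier := {x | ∃ φ : ℂ → E,
    (∃ U, IsOpen U ∧ H ⊆ U ∧ DifferentiableOn ℂ φ U) ∧
    (∃ C : ℝ, ∀ z ∈ H, ‖φ z‖ ≤ C) ∧
    (∀ t : ℝ, φ ((t : ℂ) * Complex.I) = res S ((t : ℂ) * Complex.I) x)}
  zero_mem' := ⟨0, ⟨univ, isOpen_univ, subset_univ _, differentiableOn_const 0⟩,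
    ⟨0, fun z _ => by simp⟩, fun t => by simp⟩
  add_mem' := by
    rintro a b ⟨φ, ⟨U, hU, hHU, hdU⟩, ⟨C, hC⟩, hφ⟩ ⟨ψ, ⟨V, hV, hHV, hdV⟩, ⟨D, hD⟩, hψ⟩
    refine ⟨φ + ψ, ⟨U ∩ V, hU.inter hV, subset_inter hHU hHV,
      ((hdU.mono inter_subset_left).add (hdV.mono inter_subset_right))⟩,
      ⟨C + D, fun z hz => (norm_add_le _ _).trans (add_le_add (hC z hz) (hD z hz))⟩,
      fun t => by simp [hφ t, hψ t]⟩
  smul_mem' := by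
    rintro c a ⟨φ, ⟨U, hU, hHU, hdU⟩, ⟨C, hC⟩, hφ⟩
    refine ⟨c • φ, ⟨U, hU, hHU, hdU.const_smul c⟩,
      ⟨‖c‖ * C, fun z hz => by
        rw [Pi.smul_apply, norm_smul]
        exact mul_le_mul_of_nonneg_left (hC z hz) (norm_nonneg c)⟩,
      fun t => by simp [hφ t]⟩

/-- The subspace `G₊` of `x` whose local resolvent extends boundedly and analytically
to the closed left half plane. -/
def Gp (S : E →ₗ.[ℂ] E) : Submodule ℂ E := Gsub S {z : ℂ | z.re ≤ 0}

/-- The subspace `G₋` of `x` whose local resolvent extends boundedly and analytically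
to the closed right half plane. -/
def Gm (S : E →ₗ.[ℂ] E) : Submodule ℂ E := Gsub S {z : ℂ | 0 ≤ z.re}

/-- The part of the operator `S` in the subspace `Y`: the restriction of `S` to
`{x ∈ D(S) ∩ Y : S x ∈ Y}`, regarded as an operator in `Y`. If `Y` is `S`-invariant
this is the restriction `S|Y`. -/
def partIn (S : E →ₗ.[ℂ] E) (Y : Submodule ℂ E) : ↥Y →ₗ.[ℂ] ↥Y :=
  Submodule.toLinearPMap (S.graph.comap (Y.subtype.prodMap Y.subtype))

/-- `x ∈ D(S²)`. -/
def memD2 (S : E →ₗ.[ℂ] E) (x : E) : Prop :=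
  ∃ h : x ∈ S.domain, S ⟨x, h⟩ ∈ S.domain

-- `S² x` (junk value `0` if `x ∉ D(S²)`).
open Classical in
def sqApply (S : E →ₗ.[ℂ] E) (x : E) : E :=
  if h : memD2 S x then S ⟨S ⟨x, h.choose⟩, h.choose_spec⟩ else 0

/-- `S` is dichotomous with respect to the decomposition `E = Xp ⊕ Xm`. -/
structure IsDichotomousWrt (S : E →ₗ.[ℂ] E) (Xp Xm : Submodule ℂ E) : Prop where
  closed_p : IsClosed (Xp : Set E)
  closed_m : IsClosed (Xm : Set E)
  compl : IsCompl Xp Xm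
  imag : ∀ t : ℝ, (t : ℂ) * Complex.I ∈ resolvSet S
  inv_p : ∀ x : S.domain, (x : E) ∈ Xp → S x ∈ Xp
  inv_m : ∀ x : S.domain, (x : E) ∈ Xm → S x ∈ Xm
  spec_p : pSpectrum (partIn S Xp) ⊆ {lam : ℂ | 0 < lam.re}
  spec_m : pSpectrum (partIn S Xm) ⊆ {lam : ℂ | lam.re < 0}

/-- `S` is strictly dichotomous with respect to the decomposition `E = Xp ⊕ Xm`. -/
structure IsStrictlyDichotomousWrt (S : E →ₗ.[ℂ] E) (Xp Xm : Submodule ℂ E)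
    extends IsDichotomousWrt S Xp Xm : Prop where
  bnd_p : ∃ M : ℝ, ∀ lam : ℂ, lam.re ≤ 0 →
    lam ∈ resolvSet (partIn S Xp) ∧ ‖res (partIn S Xp) lam‖ ≤ M
  bnd_m : ∃ M : ℝ, ∀ lam : ℂ, 0 ≤ lam.re →
    lam ∈ resolvSet (partIn S Xm) ∧ ‖res (partIn S Xm) lam‖ ≤ M

/-- `S` is strictly dichotomous (w.r.t. some decomposition). -/
def IsStrictlyDichotomous (S : E →ₗ.[ℂ] E) : Prop :=
  ∃ Xp Xm : Submodule ℂ E, IsStrictlyDichotomousWrt S Xp Xm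

/-- `S` is bisectorial with constant `M`. -/
def Bisectorial (S : E →ₗ.[ℂ] E) (M : ℝ) : Prop :=
  0 < M ∧ ∀ lam : ℂ, lam.re = 0 → lam ≠ 0 →
    lam ∈ resolvSet S ∧ ‖res S lam‖ ≤ M / ‖lam‖

/-- `S` is almost bisectorial with constants `M` and exponent `β`. -/
def AlmostBisectorial (S : E →ₗ.[ℂ] E) (M β : ℝ) : Prop :=
  0 < M ∧ 0 < β ∧ β < 1 ∧ ∀ lam : ℂ, lam.re = 0 → lam ≠ 0 →
    lam ∈ resolvSet S ∧ ‖res S lam‖ ≤ M / ‖lam‖ ^ β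

/-- The operator `A₊ = (2πi)⁻¹ ∫_{Re lam = h} lam⁻² (S-lam)⁻¹ dlam`. -/
def Aplus (S : E →ₗ.[ℂ] E) (h : ℝ) : E →L[ℂ] E :=
  (2 * (Real.pi : ℂ))⁻¹ •
    ∫ t : ℝ, (((h : ℂ) + (t : ℂ) * Complex.I) ^ 2)⁻¹ • res S ((h : ℂ) + (t : ℂ) * Complex.I)

/-- The operator `A₋ = -(2πi)⁻¹ ∫_{Re lam = -h} lam⁻² (S-lam)⁻¹ dlam`. -/
def Aminus (S : E →ₗ.[ℂ] E) (h : ℝ) : E →L[ℂ] E :=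
  -(2 * (Real.pi : ℂ))⁻¹ •
    ∫ t : ℝ, ((-(h : ℂ) + (t : ℂ) * Complex.I) ^ 2)⁻¹ • res S (-(h : ℂ) + (t : ℂ) * Complex.I)

/-- The operator `B₊ = (2πi)⁻¹ ∫_{Re lam = h} lam⁻¹ (S-lam)⁻¹ dlam`. -/
def Bplus (S : E →ₗ.[ℂ] E) (h : ℝ) : E →L[ℂ] E :=
  (2 * (Real.pi : ℂ))⁻¹ •
    ∫ t : ℝ, ((h : ℂ) + (t : ℂ) * Complex.I)⁻¹ • res S ((h : ℂ) + (t : ℂ) * Complex.I)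

/-- The operator `B₋ = -(2πi)⁻¹ ∫_{Re lam = -h} lam⁻¹ (S-lam)⁻¹ dlam`. -/
def Bminus (S : E →ₗ.[ℂ] E) (h : ℝ) : E →L[ℂ] E :=
  -(2 * (Real.pi : ℂ))⁻¹ •
    ∫ t : ℝ, (-(h : ℂ) + (t : ℂ) * Complex.I)⁻¹ • res S (-(h : ℂ) + (t : ℂ) * Complex.I)

/-- `M₊`, the closure of the range of `A₊`. -/
def Msubp (S : E →ₗ.[ℂ] E) (h : ℝ) : Submodule ℂ E :=
  (LinearMap.range ((Aplus S h) : E →ₗ[ℂ] E)).topologicalClosure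

/-- `M₋`, the closure of the range of `A₋`. -/
def Msubm (S : E →ₗ.[ℂ] E) (h : ℝ) : Submodule ℂ E :=
  (LinearMap.range ((Aminus S h) : E →ₗ[ℂ] E)).topologicalClosure


/-!
Since `0 ∈ ρ(S) ∩ ρ(S|X₊) ∩ ρ(S|X₋)`, writing `S x = p + m` with `p ∈ X₊`, `m ∈ X₋` gives
`x = S⁻¹ p + S⁻¹ m` with `S⁻¹ p ∈ D(S) ∩ X₊` and `S⁻¹ m ∈ D(S) ∩ X₋`, so the domain splits.
Then `S - λ` is block diagonal: the resolvent of `S` preserves `X₊` and `X₋`, and conversely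
`(S|X₊ - λ)⁻¹ P₊ + (S|X₋ - λ)⁻¹ P₋` is the resolvent of `S` whenever both parts have one, where
`P₊`, `P₋` are the bounded projections of the closed decomposition. Under strict dichotomy this
bounds the resolvent of `S` uniformly on `iℝ` by some `M`, and a Neumann series extends the bound
`2 M` to the strip `|Re λ| ≤ 1 / (2 M)`.
-/

section Resolvent

variable {T : E →ₗ.[ℂ] E} {lam lam0 : ℂ} {R : E →L[ℂ] E}

theorem IsResolventAt.unique {R' : E →L[ℂ] E} (hR : IsResolventAt T lam R)
    (hR' : IsResolventAt T lam R') : R = R' := by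
  ext x
  calc R x = R (T ⟨R' x, hR'.1 x⟩ - lam • R' x) := by rw [hR'.2.2 x (hR'.1 x)]
    _ = R' x := hR.2.1 ⟨R' x, hR'.1 x⟩

theorem isResolventAt_res (h : lam ∈ resolvSet T) : IsResolventAt T lam (res T lam) := by
  have h' : ∃ R, IsResolventAt T lam R := h
  rw [res, dif_pos h']
  exact h'.choose_spec

theorem IsResolventAt.res_eq (hR : IsResolventAt T lam R) : res T lam = R :=
  (isResolventAt_res ⟨R, hR⟩).unique hR

/-- The second resolvent identity in the form `R(lam) = R(lam0) (1 - (lam - lam0) R(lam0))⁻¹`. -/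
theorem IsResolventAt.mul_inv_unit (hR : IsResolventAt T lam0 R) (u : (E →L[ℂ] E)ˣ)
    (hu : (u : E →L[ℂ] E) = 1 - (lam - lam0) • R) :
    IsResolventAt T lam (R * ↑u⁻¹) := by
  have hcomm : Commute R ↑u⁻¹ := by
    refine Commute.units_inv_right ?_
    rw [hu]
    exact (Commute.one_right R).sub_right ((Commute.refl R).smul_right _)
  set U : E →L[ℂ] E := ↑u
  set Q : E →L[ℂ] E := ↑u⁻¹
  have hU : ∀ x, U x = x - (lam - lam0) • R x := fun x => by simp [U, hu]
  have hQU : ∀ x, Q (U x) = x := fun x => by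
    rw [← mul_apply_eq_comp, Units.inv_mul, one_apply_eq_self]
  have hUQ : ∀ x, U (Q x) = x := fun x => by
    rw [← mul_apply_eq_comp, Units.mul_inv, one_apply_eq_self]
  refine ⟨fun x => hR.1 _, fun x => ?_, fun x hx => ?_⟩
  · have hshift : R (T x - lam • (x : E)) = U x := by
      have hsplit : T x - lam • (x : E) = (T x - lam0 • (x : E)) - (lam - lam0) • (x : E) := by
        rw [sub_smul]; abel
      rw [hsplit, map_sub, map_smul, hR.2.1 x, hU]
    rw [hcomm.eq, mul_apply_eq_comp, hshift, hQU]
  · replace hx : R (Q x) ∈ T.domain := hx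
    calc T ⟨R (Q x), hx⟩ - lam • R (Q x)
        = (T ⟨R (Q x), hx⟩ - lam0 • R (Q x)) - (lam - lam0) • R (Q x) := by
          rw [sub_smul]; abel
      _ = U (Q x) := by rw [hR.2.2 _ hx, hU]
      _ = x := hUQ x

theorem IsResolventAt.exists_isResolventAt_of_norm_sub_mul_le [CompleteSpace E]
    (hR : IsResolventAt T lam0 R) (hsmall : ‖lam - lam0‖ * ‖R‖ ≤ 1 / 2) :
    ∃ R', IsResolventAt T lam R' ∧ ‖R'‖ ≤ 2 * ‖R‖ := by
  set t : E →L[ℂ] E := (lam - lam0) • R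
  have ht : ‖t‖ ≤ 1 / 2 := (norm_smul _ R).le.trans hsmall
  let u := Units.oneSub t (ht.trans_lt (by norm_num))
  have hinv : ‖(↑u⁻¹ : E →L[ℂ] E)‖ ≤ 2 := by
    have hgeom := tsum_geometric_le_of_norm_lt_one t (ht.trans_lt (by norm_num))
    have hone : ‖(1 : E →L[ℂ] E)‖ ≤ 1 := ContinuousLinearMap.norm_id_le
    have h2 : (1 - ‖t‖)⁻¹ ≤ 2 := by
      rw [inv_le_comm₀ (by linarith) (by norm_num)]; linarith
    exact hgeom.trans (by linarith)
  refine ⟨R * ↑u⁻¹, hR.mul_inv_unit u rfl, ?_⟩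
  calc ‖R * ↑u⁻¹‖ ≤ ‖R‖ * 2 := (norm_mul_le _ _).trans (by gcongr)
    _ = 2 * ‖R‖ := mul_comm _ _

theorem mem_resolvSet_and_norm_res_le_of_abs_re_le [CompleteSpace E] {M : ℝ} (hM : 0 < M)
    (himag : ∀ t : ℝ, (t : ℂ) * I ∈ resolvSet T ∧ ‖res T ((t : ℂ) * I)‖ ≤ M)
    (hlam : |lam.re| ≤ (2 * M)⁻¹) : lam ∈ resolvSet T ∧ ‖res T lam‖ ≤ 2 * M := by
  obtain ⟨hmem, hbound⟩ := himag lam.im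
  have hdist : ‖lam - lam.im * I‖ = |lam.re| := by
    have hre : lam - lam.im * I = (lam.re : ℂ) := by apply Complex.ext <;> simp
    rw [hre, Complex.norm_real, Real.norm_eq_abs]
  have hsmall : ‖lam - lam.im * I‖ * ‖res T (lam.im * I)‖ ≤ 1 / 2 := by
    rw [hdist]
    calc |lam.re| * ‖res T (lam.im * I)‖ ≤ (2 * M)⁻¹ * M := by gcongr
      _ = 1 / 2 := by field_simp
  obtain ⟨R', hR', hnorm⟩ :=
    (isResolventAt_res hmem).exists_isResolventAt_of_norm_sub_mul_le hsmall
  exact ⟨⟨R', hR'⟩, hR'.res_eq ▸ hnorm.trans (by gcongr)⟩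

end Resolvent

section PartIn

variable {S : E →ₗ.[ℂ] E} {Y : Submodule ℂ E} {lam : ℂ}

theorem mem_graph_partIn_iff {a b : Y} :
    (a, b) ∈ (partIn S Y).graph ↔ ((a : E), (b : E)) ∈ S.graph := by
  rw [partIn, Submodule.toLinearPMap_graph_eq, Submodule.mem_comap]
  · rfl
  rintro ⟨a, b⟩ hab (rfl : a = 0)
  simpa using S.graph_fst_eq_zero_snd hab rfl

theorem coe_mem_domain_of_mem_domain_partIn (a : (partIn S Y).domain) :
    ((a : Y) : E) ∈ S.domain :=
  S.mem_domain_of_mem_graph (mem_graph_partIn_iff.mp ((partIn S Y).mem_graph a))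

theorem coe_partIn_apply (a : (partIn S Y).domain) :
    ((partIn S Y a : Y) : E) = S ⟨a, coe_mem_domain_of_mem_domain_partIn a⟩ :=
  (S.image_iff _).mpr (mem_graph_partIn_iff.mp ((partIn S Y).mem_graph a))

theorem coe_partIn_sub_smul (a : (partIn S Y).domain) :
    ((partIn S Y a - lam • (a : Y) : Y) : E) =
      S ⟨a, coe_mem_domain_of_mem_domain_partIn a⟩ - lam • ((a : Y) : E) := by
  rw [Submodule.coe_sub, Submodule.coe_smul, coe_partIn_apply]

theorem mem_domain_partIn {a : Y} (ha : (a : E) ∈ S.domain) (hSa : S ⟨a, ha⟩ ∈ Y) :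
    a ∈ (partIn S Y).domain :=
  LinearPMap.mem_domain_of_mem_graph (y := ⟨_, hSa⟩)
    (mem_graph_partIn_iff.mpr (S.mem_graph ⟨a, ha⟩))

theorem res_mem_of_mem_resolvSet_partIn (hS : lam ∈ resolvSet S)
    (hY : lam ∈ resolvSet (partIn S Y)) {x : E} (hx : x ∈ Y) : res S lam x ∈ Y := by
  have hRY := isResolventAt_res hY
  set y : (partIn S Y).domain := ⟨_, hRY.1 ⟨x, hx⟩⟩
  have hy : S ⟨y, coe_mem_domain_of_mem_domain_partIn y⟩ - lam • ((y : Y) : E) = x := by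
    rw [← coe_partIn_sub_smul, hRY.2.2 _ y.2]
  rw [← hy, (isResolventAt_res hS).2.1]
  exact (y : Y).2

theorem mem_resolvSet_partIn_of_res_mem (hS : lam ∈ resolvSet S)
    (hY : ∀ x ∈ Y, res S lam x ∈ Y) : lam ∈ resolvSet (partIn S Y) := by
  have hR := isResolventAt_res hS
  refine ⟨(res S lam).restrict hY, fun b => ?_, fun b => Subtype.ext ?_, fun b hb => Subtype.ext ?_⟩
  · refine mem_domain_partIn (hR.1 b) ?_
    change S ⟨res S lam b, hR.1 b⟩ ∈ Y
    rw [← sub_add_cancel (S _) (lam • res S lam b), hR.2.2]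
    exact Y.add_mem b.2 (Y.smul_mem lam (hY b b.2))
  · rw [ContinuousLinearMap.coe_restrict_apply, coe_partIn_sub_smul]
    exact hR.2.1 _
  · rw [coe_partIn_sub_smul]
    exact hR.2.2 _ _

end PartIn

section Decomposition

variable {S : E →ₗ.[ℂ] E} {Y Z : Submodule ℂ E} {lam : ℂ}

theorem domain_eq_sup_of_mem_resolvSet (hYZ : Y ⊔ Z = ⊤) (hS : lam ∈ resolvSet S)
    (hY : lam ∈ resolvSet (partIn S Y)) (hZ : lam ∈ resolvSet (partIn S Z)) :
    S.domain = S.domain ⊓ Y ⊔ S.domain ⊓ Z := by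
  refine le_antisymm (fun x hx => ?_) (sup_le inf_le_left inf_le_left)
  have hR := isResolventAt_res hS
  obtain ⟨y, hy, z, hz, hyz⟩ :=
    Submodule.mem_sup.mp (hYZ ▸ Submodule.mem_top : S ⟨x, hx⟩ - lam • x ∈ Y ⊔ Z)
  have hx_eq : res S lam y + res S lam z = x := by rw [← map_add, hyz, hR.2.1 ⟨x, hx⟩]
  exact hx_eq ▸ Submodule.add_mem_sup ⟨hR.1 y, res_mem_of_mem_resolvSet_partIn hS hY hy⟩
    ⟨hR.1 z, res_mem_of_mem_resolvSet_partIn hS hZ hz⟩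

theorem exists_add_of_domain_eq_sup (hdec : S.domain = S.domain ⊓ Y ⊔ S.domain ⊓ Z)
    (x : S.domain) : ∃ a b : S.domain, (a : E) ∈ Y ∧ (b : E) ∈ Z ∧ x = a + b := by
  have hx : (x : E) ∈ S.domain ⊓ Y ⊔ S.domain ⊓ Z := hdec ▸ x.2
  obtain ⟨a, ⟨haD, haY⟩, b, ⟨hbD, hbZ⟩, hab⟩ := Submodule.mem_sup.mp hx
  exact ⟨⟨a, haD⟩, ⟨b, hbD⟩, haY, hbZ, Subtype.ext hab.symm⟩

theorem apply_add_sub_smul (a b : S.domain) :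
    S (a + b) - lam • ((a + b : S.domain) : E) =
      (S a - lam • (a : E)) + (S b - lam • (b : E)) := by
  rw [S.map_add, Submodule.coe_add, smul_add]
  abel

theorem res_mem_of_domain_eq_sup (hYZ : Disjoint Y Z)
    (hdec : S.domain = S.domain ⊓ Y ⊔ S.domain ⊓ Z)
    (hSY : ∀ x : S.domain, (x : E) ∈ Y → S x ∈ Y) (hSZ : ∀ x : S.domain, (x : E) ∈ Z → S x ∈ Z)
    (hS : lam ∈ resolvSet S) {x : E} (hx : x ∈ Y) : res S lam x ∈ Y := by
  have hR := isResolventAt_res hS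
  obtain ⟨a, b, ha, hb, hab⟩ := exists_add_of_domain_eq_sup hdec ⟨_, hR.1 x⟩
  have hx_eq : (S a - lam • (a : E)) + (S b - lam • (b : E)) = x := by
    rw [← apply_add_sub_smul, ← hab]
    exact hR.2.2 x _
  have hbZ : S b - lam • (b : E) ∈ Z := Z.sub_mem (hSZ b hb) (Z.smul_mem lam hb)
  have hbY : S b - lam • (b : E) ∈ Y := by
    rw [← add_sub_cancel_left (S a - lam • (a : E)) (S b - lam • (b : E)), hx_eq]
    exact Y.sub_mem hx (Y.sub_mem (hSY a ha) (Y.smul_mem lam ha))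
  have hb0 : (b : E) = 0 := by
    rw [← hR.2.1 b, Submodule.disjoint_def.mp hYZ _ hbY hbZ, map_zero]
  have hres : res S lam x = a := by
    rw [show res S lam x = ((⟨_, hR.1 x⟩ : S.domain) : E) from rfl, hab, Submodule.coe_add, hb0,
      add_zero]
  exact hres ▸ ha

end Decomposition

section BlockDiag

variable {Y Z : Submodule ℂ E}

def blockDiag (hYZ : Y.IsTopCompl Z) (A : Y →L[ℂ] Y) (B : Z →L[ℂ] Z) : E →L[ℂ] E :=
  Y.subtypeL ∘L A ∘L Y.projectionOntoL Z hYZ + Z.subtypeL ∘L B ∘L Z.projectionOntoL Y hYZ.symm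

variable (hYZ : Y.IsTopCompl Z) (A : Y →L[ℂ] Y) (B : Z →L[ℂ] Z)

theorem blockDiag_apply_add (y : Y) (z : Z) :
    blockDiag hYZ A B (y + z) = A y + B z := by
  simp [blockDiag]

theorem norm_blockDiag_le :
    ‖blockDiag hYZ A B‖ ≤
      ‖A‖ * ‖Y.projectionOntoL Z hYZ‖ + ‖B‖ * ‖Z.projectionOntoL Y hYZ.symm‖ := by
  have hcomp : ∀ (W : Submodule ℂ E) (C : W →L[ℂ] W) (P : E →L[ℂ] W),
      ‖W.subtypeL ∘L C ∘L P‖ ≤ ‖C‖ * ‖P‖ := fun W C P =>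
    calc ‖W.subtypeL ∘L C ∘L P‖ ≤ ‖W.subtypeL‖ * (‖C‖ * ‖P‖) :=
          (W.subtypeL.opNorm_comp_le _).trans (by gcongr; exact C.opNorm_comp_le P)
      _ ≤ ‖C‖ * ‖P‖ := mul_le_of_le_one_left (by positivity) (W.norm_subtypeL_le)
  exact (norm_add_le _ _).trans (add_le_add (hcomp _ _ _) (hcomp _ _ _))

end BlockDiag

theorem isResolventAt_blockDiag {S : E →ₗ.[ℂ] E} {Y Z : Submodule ℂ E} {lam : ℂ}
    (hYZ : Y.IsTopCompl Z) (hdec : S.domain = S.domain ⊓ Y ⊔ S.domain ⊓ Z)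
    (hSY : ∀ x : S.domain, (x : E) ∈ Y → S x ∈ Y) (hSZ : ∀ x : S.domain, (x : E) ∈ Z → S x ∈ Z)
    {A : Y →L[ℂ] Y} {B : Z →L[ℂ] Z} (hA : IsResolventAt (partIn S Y) lam A)
    (hB : IsResolventAt (partIn S Z) lam B) :
    IsResolventAt S lam (blockDiag hYZ A B) := by
  have hsum : ∀ x : E, ∃ (y : Y) (z : Z), x = y + z := fun x => by
    have hx : x ∈ Y ⊔ Z := hYZ.isCompl.sup_eq_top ▸ Submodule.mem_top
    obtain ⟨y, hy, z, hz, rfl⟩ := Submodule.mem_sup.mp hx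
    exact ⟨⟨y, hy⟩, ⟨z, hz⟩, rfl⟩
  refine ⟨fun x => ?_, fun x => ?_, fun x hx => ?_⟩
  · obtain ⟨y, z, rfl⟩ := hsum x
    rw [blockDiag_apply_add]
    exact S.domain.add_mem (coe_mem_domain_of_mem_domain_partIn ⟨_, hA.1 y⟩)
      (coe_mem_domain_of_mem_domain_partIn ⟨_, hB.1 z⟩)
  · obtain ⟨a, b, ha, hb, rfl⟩ := exists_add_of_domain_eq_sup hdec x
    let a' : (partIn S Y).domain := ⟨⟨a, ha⟩, mem_domain_partIn a.2 (hSY a ha)⟩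
    let b' : (partIn S Z).domain := ⟨⟨b, hb⟩, mem_domain_partIn b.2 (hSZ b hb)⟩
    rw [apply_add_sub_smul, ← coe_partIn_sub_smul a', ← coe_partIn_sub_smul b',
      blockDiag_apply_add, hA.2.1 a', hB.2.1 b']
    rfl
  · obtain ⟨y, z, rfl⟩ := hsum x
    let a' : (partIn S Y).domain := ⟨A y, hA.1 y⟩
    let b' : (partIn S Z).domain := ⟨B z, hB.1 z⟩
    have hRx : (⟨_, hx⟩ : S.domain) = ⟨_, coe_mem_domain_of_mem_domain_partIn a'⟩ +
        ⟨_, coe_mem_domain_of_mem_domain_partIn b'⟩ :=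
      Subtype.ext (blockDiag_apply_add hYZ A B y z)
    change S ⟨_, hx⟩ - lam • ((⟨_, hx⟩ : S.domain) : E) = _
    rw [hRx, apply_add_sub_smul, ← coe_partIn_sub_smul a', ← coe_partIn_sub_smul b',
      hA.2.2 y a'.2, hB.2.2 z b'.2]

namespace IsDichotomousWrt

variable {S : E →ₗ.[ℂ] E} {Xp Xm : Submodule ℂ E} {lam : ℂ}

theorem mem_resolvSet_partIn_p (hS : IsDichotomousWrt S Xp Xm) (hlam : lam.re ≤ 0) :
    lam ∈ resolvSet (partIn S Xp) :=
  not_not.mp fun h => (hS.spec_p h : 0 < lam.re).not_ge hlam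

theorem mem_resolvSet_partIn_m (hS : IsDichotomousWrt S Xp Xm) (hlam : 0 ≤ lam.re) :
    lam ∈ resolvSet (partIn S Xm) :=
  not_not.mp fun h => (hS.spec_m h : lam.re < 0).not_ge hlam

theorem domain_eq_sup (hS : IsDichotomousWrt S Xp Xm) :
    S.domain = S.domain ⊓ Xp ⊔ S.domain ⊓ Xm :=
  domain_eq_sup_of_mem_resolvSet (lam := 0) hS.compl.sup_eq_top (by simpa using hS.imag 0)
    (hS.mem_resolvSet_partIn_p le_rfl) (hS.mem_resolvSet_partIn_m le_rfl)

theorem res_mem_p (hS : IsDichotomousWrt S Xp Xm) (hlam : lam ∈ resolvSet S) {x : E}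
    (hx : x ∈ Xp) : res S lam x ∈ Xp :=
  res_mem_of_domain_eq_sup hS.compl.disjoint hS.domain_eq_sup hS.inv_p hS.inv_m hlam hx

theorem res_mem_m (hS : IsDichotomousWrt S Xp Xm) (hlam : lam ∈ resolvSet S) {x : E}
    (hx : x ∈ Xm) : res S lam x ∈ Xm :=
  res_mem_of_domain_eq_sup hS.compl.symm.disjoint (sup_comm (S.domain ⊓ Xp) _ ▸ hS.domain_eq_sup)
    hS.inv_m hS.inv_p hlam hx

theorem isTopCompl [CompleteSpace E] (hS : IsDichotomousWrt S Xp Xm) : Xp.IsTopCompl Xm :=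
  Submodule.IsCompl.isTopCompl_of_isClosed hS.compl hS.closed_p hS.closed_m

theorem isResolventAt_blockDiag [CompleteSpace E] (hS : IsDichotomousWrt S Xp Xm)
    (hp : lam ∈ resolvSet (partIn S Xp)) (hm : lam ∈ resolvSet (partIn S Xm)) :
    IsResolventAt S lam (blockDiag hS.isTopCompl (res (partIn S Xp) lam) (res (partIn S Xm) lam)) :=
  _root_.isResolventAt_blockDiag hS.isTopCompl hS.domain_eq_sup hS.inv_p hS.inv_m
    (isResolventAt_res hp) (isResolventAt_res hm)

theorem mem_resolvSet_iff [CompleteSpace E] (hS : IsDichotomousWrt S Xp Xm) :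
    lam ∈ resolvSet S ↔ lam ∈ resolvSet (partIn S Xp) ∧ lam ∈ resolvSet (partIn S Xm) :=
  ⟨fun h => ⟨mem_resolvSet_partIn_of_res_mem h fun _ => hS.res_mem_p h,
      mem_resolvSet_partIn_of_res_mem h fun _ => hS.res_mem_m h⟩,
    fun ⟨hp, hm⟩ => ⟨_, hS.isResolventAt_blockDiag hp hm⟩⟩

theorem pSpectrum_eq [CompleteSpace E] (hS : IsDichotomousWrt S Xp Xm) :
    pSpectrum S = pSpectrum (partIn S Xp) ∪ pSpectrum (partIn S Xm) := by
  ext lam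
  simp only [pSpectrum, Set.mem_union, Set.mem_compl_iff, hS.mem_resolvSet_iff, not_and_or]

end IsDichotomousWrt

theorem IsStrictlyDichotomousWrt.exists_resolvent_bound_on_strip [CompleteSpace E]
    {S : E →ₗ.[ℂ] E} {Xp Xm : Submodule ℂ E} (hS : IsStrictlyDichotomousWrt S Xp Xm) :
    ∃ h M : ℝ, 0 < h ∧ 0 < M ∧
      ∀ lam : ℂ, |lam.re| ≤ h → lam ∈ resolvSet S ∧ ‖res S lam‖ ≤ M := by
  obtain ⟨Mp, hMp⟩ := hS.bnd_p
  obtain ⟨Mm, hMm⟩ := hS.bnd_m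
  have hd := hS.toIsDichotomousWrt
  set M := Mp * ‖Xp.projectionOntoL Xm hd.isTopCompl‖ +
    Mm * ‖Xm.projectionOntoL Xp hd.isTopCompl.symm‖ + 1
  have hMp0 : 0 ≤ Mp := (norm_nonneg _).trans (hMp 0 le_rfl).2
  have hMm0 : 0 ≤ Mm := (norm_nonneg _).trans (hMm 0 le_rfl).2
  have hM : 0 < M := by positivity
  have himag : ∀ t : ℝ, (t : ℂ) * I ∈ resolvSet S ∧ ‖res S ((t : ℂ) * I)‖ ≤ M := fun t => by
    have hre : ((t : ℂ) * I).re = 0 := by simp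
    obtain ⟨hp, hnp⟩ := hMp _ hre.le
    obtain ⟨hm, hnm⟩ := hMm _ hre.ge
    have hR := hd.isResolventAt_blockDiag hp hm
    refine ⟨⟨_, hR⟩, hR.res_eq ▸ (norm_blockDiag_le _ _ _).trans ?_⟩
    exact (add_le_add (by gcongr) (by gcongr)).trans (le_add_of_nonneg_right zero_le_one)
  exact ⟨(2 * M)⁻¹, 2 * M, by positivity, by positivity,
    fun lam hlam => mem_resolvSet_and_norm_res_le_of_abs_re_le hM himag hlam⟩

variable {X : Type*} [NormedAddCommGroup X] [NormedSpace ℂ X] [CompleteSpace X]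

/-- block structure of a dichotomous operator, and the uniform resolvent
bound on a strip for a strictly dichotomous operator. -/
theorem statement2 (S : X →ₗ.[ℂ] X) (Xp Xm : Submodule ℂ X)
    (hdich : IsDichotomousWrt S Xp Xm) :
    S.domain = S.domain ⊓ Xp ⊔ S.domain ⊓ Xm ∧
    pSpectrum S = pSpectrum (partIn S Xp) ∪ pSpectrum (partIn S Xm) ∧
    (∀ lam ∈ resolvSet S, ∀ x ∈ Xp, res S lam x ∈ Xp) ∧
    (∀ lam ∈ resolvSet S, ∀ x ∈ Xm, res S lam x ∈ Xm) ∧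
    (IsStrictlyDichotomousWrt S Xp Xm →
      ∃ h M : ℝ, 0 < h ∧ 0 < M ∧
        ∀ lam : ℂ, |lam.re| ≤ h → lam ∈ resolvSet S ∧ ‖res S lam‖ ≤ M) :=
  ⟨hdich.domain_eq_sup, hdich.pSpectrum_eq, fun _ hlam _ hx => hdich.res_mem_p hlam hx,
    fun _ hlam _ hx => hdich.res_mem_m hlam hx,
    IsStrictlyDichotomousWrt.exists_resolvent_bound_on_strip⟩

end
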